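/- arXiv:2307.15874 — 5 statements merged into one kernel-verified Lean document; each statement's English description precedes it below -/
import Mathlib

section
/- Let N, m, r be positive natural numbers, let P be a symmetric positive definite real N×N matrix, let μ ∈ (0,1), let K̄ be a real m×N matrix, and let S_{M,1}, …, S_{M,r} be real N×N matrices and S_{H,1}, …, S_{H,r} be real N×m matrices. Suppose that for each j ∈ {1, …, r} the block matrix [[(1−μ)·P, (S_{M,j} − S_{H,j}·K̄)ᵀ·P], [P·(S_{M,j} − S_{H,j}·K̄), P]] is positive definite. Then for every sequence of weight vectors (σ(k))_{k∈ℕ} with σ_j(k) ≥ 0 and Σ_{j=1}^r σ_j(k) = 1 for all k, and every x₀ ∈ ℝᴺ, the sequence defined by x_{k+1} = (M_k − H_k·K̄)·x_k, where M_k = Σ_j σ_j(k)·S_{M,j} and H_k = Σ_j σ_j(k)·S_{H,j}, converges to 0 as k → ∞. -/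
/-!
The vertex LMIs are linear in the closed-loop matrix `A`, so the set of matrices `A` satisfying
them (non-strictly) is convex and contains every convex combination `M_k - H_k K̄` of the
vertices. By the Schur complement with respect to the block `P`, the LMI for `A` says
`Aᵀ P A ≤ (1 - μ) P`, so `V(x) = xᵀ P x` contracts by the factor `1 - μ` at each step. Since `P`
is positive definite, `V` dominates a multiple of `‖x‖²`, and geometric decay of `V` forces
`x_k → 0`.
-/

open Matrix Filter Finset Topology

namespace Matrix

variable {n : Type*} [Fintype n]

theorem PosDef.exists_pos_mul_norm_sq_le {P : Matrix n n ℝ} (hP : P.PosDef) :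
    ∃ c > 0, ∀ v : n → ℝ, c * ‖v‖ ^ 2 ≤ v ⬝ᵥ P *ᵥ v := by
  rcases isEmpty_or_nonempty n with hn | hn
  · exact ⟨1, one_pos, fun v => by simp [Subsingleton.elim v 0]⟩
  have hquad : ∀ (a : ℝ) (u : n → ℝ), (a • u) ⬝ᵥ P *ᵥ (a • u) = a ^ 2 * (u ⬝ᵥ P *ᵥ u) := by
    intro a u
    rw [smul_dotProduct, mulVec_smul, dotProduct_smul, smul_eq_mul, smul_eq_mul]
    ring
  have hcont : Continuous fun v : n → ℝ => v ⬝ᵥ P *ᵥ v :=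
    continuous_id.dotProduct (continuous_const.matrix_mulVec continuous_id)
  obtain ⟨u₀, hu₀, hmin⟩ := (isCompact_sphere (0 : n → ℝ) 1).exists_isMinOn
    (NormedSpace.sphere_nonempty.mpr zero_le_one) hcont.continuousOn
  have hu₀ne : u₀ ≠ 0 := ne_zero_of_mem_unit_sphere ⟨u₀, hu₀⟩
  refine ⟨u₀ ⬝ᵥ P *ᵥ u₀, by simpa using hP.dotProduct_mulVec_pos hu₀ne, fun v => ?_⟩
  rcases eq_or_ne v 0 with rfl | hv
  · simp
  have hnv : ‖v‖ ≠ 0 := norm_ne_zero_iff.mpr hv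
  have hsphere : ‖v‖⁻¹ • v ∈ Metric.sphere (0 : n → ℝ) 1 := by
    simp [norm_smul, inv_mul_cancel₀ hnv]
  calc u₀ ⬝ᵥ P *ᵥ u₀ * ‖v‖ ^ 2
      ≤ (‖v‖⁻¹ • v) ⬝ᵥ P *ᵥ (‖v‖⁻¹ • v) * ‖v‖ ^ 2 := by gcongr; exact hmin hsphere
    _ = v ⬝ᵥ P *ᵥ v := by rw [hquad]; field_simp

theorem PosDef.tendsto_zero_of_dotProduct_mulVec_succ_le {P : Matrix n n ℝ} (hP : P.PosDef)
    {ρ : ℝ} (hρ₀ : 0 ≤ ρ) (hρ₁ : ρ < 1) {x : ℕ → n → ℝ}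
    (hx : ∀ k, x (k + 1) ⬝ᵥ P *ᵥ x (k + 1) ≤ ρ * (x k ⬝ᵥ P *ᵥ x k)) :
    Tendsto x atTop (𝓝 0) := by
  obtain ⟨c, hc, hcoer⟩ := hP.exists_pos_mul_norm_sq_le
  have hV : Tendsto (fun k => x k ⬝ᵥ P *ᵥ x k) atTop (𝓝 0) := by
    refine squeeze_zero (fun k => by simpa using hP.posSemidef.dotProduct_mulVec_nonneg (x k))
      (fun k => le_geom (u := fun k => x k ⬝ᵥ P *ᵥ x k) hρ₀ k fun i _ => hx i) ?_
    simpa using (tendsto_pow_atTop_nhds_zero_of_lt_one hρ₀ hρ₁).mul_const (x 0 ⬝ᵥ P *ᵥ x 0)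
  have hsq : Tendsto (fun k => ‖x k‖ ^ 2) atTop (𝓝 0) :=
    squeeze_zero (fun _ => by positivity) (fun k => (le_div_iff₀' hc).mpr (hcoer (x k)))
      (by simpa using hV.div_const c)
  rw [tendsto_zero_iff_norm_tendsto_zero]
  simpa using hsq.sqrt

theorem PosSemidef.dotProduct_mulVec_mulVec_le {P A : Matrix n n ℝ} {ρ : ℝ}
    (h : (ρ • P - Aᵀ * P * A).PosSemidef) (v : n → ℝ) :
    (A *ᵥ v) ⬝ᵥ P *ᵥ (A *ᵥ v) ≤ ρ * (v ⬝ᵥ P *ᵥ v) := by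
  have hnonneg := h.dotProduct_mulVec_nonneg v
  have hconj : v ⬝ᵥ (Aᵀ * P * A) *ᵥ v = (A *ᵥ v) ⬝ᵥ P *ᵥ (A *ᵥ v) := by
    rw [← mulVec_mulVec, ← mulVec_mulVec, dotProduct_mulVec, vecMul_transpose]
  rw [star_trivial, sub_mulVec, dotProduct_sub, smul_mulVec, dotProduct_smul, smul_eq_mul,
    hconj] at hnonneg
  linarith

def lyapunovLMI (P : Matrix n n ℝ) (μ : ℝ) (A : Matrix n n ℝ) : Matrix (n ⊕ n) (n ⊕ n) ℝ :=
  fromBlocks ((1 - μ) • P) (Aᵀ * P) (P * A) P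

theorem convex_setOf_posSemidef_lyapunovLMI (P : Matrix n n ℝ) (μ : ℝ) :
    Convex ℝ {A | (lyapunovLMI P μ A).PosSemidef} := by
  intro A hA B hB a b ha hb hab
  have hcomb : lyapunovLMI P μ (a • A + b • B) = a • lyapunovLMI P μ A + b • lyapunovLMI P μ B := by
    simp only [lyapunovLMI, fromBlocks_smul, fromBlocks_add, transpose_add, transpose_smul,
      Matrix.add_mul, Matrix.mul_add, Matrix.smul_mul, Matrix.mul_smul, ← add_smul, hab, one_smul]
  simpa only [Set.mem_ofPred_eq, hcomb] using (hA.smul ha).add (hB.smul hb)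

theorem PosDef.posSemidef_sub_of_posSemidef_lyapunovLMI [DecidableEq n] {P A : Matrix n n ℝ}
    {μ : ℝ} (hP : P.PosDef) (h : (lyapunovLMI P μ A).PosSemidef) :
    ((1 - μ) • P - Aᵀ * P * A).PosSemidef := by
  have := hP.isUnit.invertible
  have hadj : (Aᵀ * P)ᴴ = P * A := by
    rw [conjTranspose_eq_transpose_of_trivial, transpose_mul, transpose_transpose,
      ← conjTranspose_eq_transpose_of_trivial, hP.isHermitian.eq]
  have hblock : (fromBlocks ((1 - μ) • P) (Aᵀ * P) (Aᵀ * P)ᴴ P).PosSemidef := by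
    rwa [hadj]
  have hschur := (PosDef.fromBlocks₂₂ _ _ hP).mp hblock
  rwa [hadj, mul_inv_cancel_right_of_invertible, ← Matrix.mul_assoc] at hschur

end Matrix

theorem stmt_3_general (N m r : ℕ)
    (P : Matrix (Fin N) (Fin N) ℝ) (hP : P.PosDef)
    (μ : ℝ) (hμ : 0 < μ) (hμ1 : μ < 1)
    (Kbar : Matrix (Fin m) (Fin N) ℝ)
    (SM : Fin r → Matrix (Fin N) (Fin N) ℝ)
    (SH : Fin r → Matrix (Fin N) (Fin m) ℝ)
    (hLMI : ∀ j, (Matrix.fromBlocks ((1 - μ) • P) ((SM j - SH j * Kbar)ᵀ * P)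
      (P * (SM j - SH j * Kbar)) P).PosDef) :
    ∀ σ : ℕ → Fin r → ℝ, (∀ k j, 0 ≤ σ k j) → (∀ k, (∑ j, σ k j) = 1) →
    ∀ (x₀ : Fin N → ℝ) (x : ℕ → Fin N → ℝ), x 0 = x₀ →
    (∀ k, x (k + 1) =
      ((∑ j, σ k j • SM j) - (∑ j, σ k j • SH j) * Kbar).mulVec (x k)) →
    Tendsto x atTop (nhds 0) := by
  intro σ hσ₀ hσ₁ _ x _ hstep
  have hclosed : ∀ k, (∑ j, σ k j • SM j) - (∑ j, σ k j • SH j) * Kbar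
      = ∑ j, σ k j • (SM j - SH j * Kbar) := fun k => by
    simp only [smul_sub, sum_sub_distrib, Matrix.sum_mul, Matrix.smul_mul]
  have hvertexLMI : ∀ k, (lyapunovLMI P μ (∑ j, σ k j • (SM j - SH j * Kbar))).PosSemidef :=
    fun k => (convex_setOf_posSemidef_lyapunovLMI P μ).sum_mem (fun j _ => hσ₀ k j) (hσ₁ k)
      fun j _ => (hLMI j).posSemidef
  refine hP.tendsto_zero_of_dotProduct_mulVec_succ_le (ρ := 1 - μ) (by linarith) (by linarith) fun k => ?_
  rw [hstep k, hclosed k]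
  exact (hP.posSemidef_sub_of_posSemidef_lyapunovLMI (hvertexLMI k)).dotProduct_mulVec_mulVec_le _

/-- Lemma 2: feasibility of the stability LMI at the vertices of the polytopic
overapproximation guarantees global asymptotic stability of the closed-loop
platoon system for every admissible convex-combination (delay) sequence. -/
theorem stmt_3 (N m r : ℕ) (hN : 0 < N) (hm : 0 < m) (hr : 0 < r)
    (P : Matrix (Fin N) (Fin N) ℝ) (hP : P.PosDef)
    (μ : ℝ) (hμ : 0 < μ) (hμ1 : μ < 1)
    (Kbar : Matrix (Fin m) (Fin N) ℝ)
    (SM : Fin r → Matrix (Fin N) (Fin N) ℝ)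
    (SH : Fin r → Matrix (Fin N) (Fin m) ℝ)
    (hLMI : ∀ j, (Matrix.fromBlocks ((1 - μ) • P) ((SM j - SH j * Kbar)ᵀ * P)
      (P * (SM j - SH j * Kbar)) P).PosDef) :
    ∀ σ : ℕ → Fin r → ℝ, (∀ k j, 0 ≤ σ k j) → (∀ k, (∑ j, σ k j) = 1) →
    ∀ (x₀ : Fin N → ℝ) (x : ℕ → Fin N → ℝ), x 0 = x₀ →
    (∀ k, x (k + 1) =
      ((∑ j, σ k j • SM j) - (∑ j, σ k j • SH j) * Kbar).mulVec (x k)) →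
    Tendsto x atTop (nhds 0) :=
  stmt_3_general N m r P hP μ hμ hμ1 Kbar SM SH hLMI
end

section
/- Let p ≥ 1 and set N = 3 + p. Let r be a positive natural number and let S_{M,1}, …, S_{M,r} be real N×N matrices and S_{H,1}, …, S_{H,r} be real N×1 matrices. Suppose there exist a symmetric positive definite real N×N matrix 𝒲, a real 1×3 matrix 𝒴, a real N×N matrix 𝒵 with block lower-triangular structure 𝒵 = [[𝒵₁, 0], [𝒵₂, 𝒵₃]] where 𝒵₁ is 3×3, and a scalar μ ∈ (0,1), such that for each j ∈ {1, …, r} the block matrix [[𝒵 + 𝒵ᵀ − 𝒲, 𝒵ᵀ·S_{M,j}ᵀ − [𝒴 0]ᵀ·S_{H,j}ᵀ], [S_{M,j}·𝒵 − S_{H,j}·[𝒴 0], (1−μ)·𝒲]] is positive definite, where [𝒴 0] denotes the 1×N matrix whose first three columns are 𝒴 and remaining columns are zero. Then 𝒵₁ is invertible, and setting K = 𝒴·𝒵₁⁻¹ and K̄ = [K 0] ∈ ℝ^{1×N}, for every sequence of weight vectors (σ(k))_{k∈ℕ} with σ_j(k) ≥ 0 and Σ_{j=1}^r σ_j(k)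 = 1 for all k, and every x₀ ∈ ℝᴺ, the sequence x_{k+1} = (M_k − H_k·K̄)·x_k, where M_k = Σ_j σ_j(k)·S_{M,j} and H_k = Σ_j σ_j(k)·S_{H,j}, converges to 0 as k → ∞. -/
/-!
`V x = xᵀ W⁻¹ x` is a common Lyapunov function for all admissible delay sequences. The
(1,1) block gives `Z + Zᵀ ≻ W ≻ 0`, so `Z` and its leading block `Z₁` are invertible, and
`Z + Zᵀ - W ≼ Zᵀ W⁻¹ Z` because `(Z - W)ᵀ W⁻¹ (Z - W) ≽ 0`. The LMI is affine in the vertex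
data, so its quadratic form stays nonnegative at every convex combination `(M, H)`, where the
off-diagonal block becomes `(M - H K̄) Z` since `K̄ Z = [𝒴 0]`. Evaluating that form at
`(Z⁻¹ y, -(1 - μ)⁻¹ W⁻¹ (M - H K̄) y)` yields `V ((M - H K̄) y) ≤ (1 - μ) V y`, so `V` decays
geometrically along every trajectory and `x k → 0`.
-/

open Matrix Filter Finset

namespace Matrix

variable {m n : Type*} [Fintype m] [Fintype n]

theorem PosSemidef.dotProduct_fromBlocks_transpose_nonneg {P : Matrix m m ℝ}
    {B : Matrix n m ℝ} {Q : Matrix n n ℝ} (h : (fromBlocks P Bᵀ B Q).PosSemidef)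
    (u : m → ℝ) (v : n → ℝ) :
    0 ≤ u ⬝ᵥ P *ᵥ u + 2 * (v ⬝ᵥ B *ᵥ u) + v ⬝ᵥ Q *ᵥ v := by
  have h := h.dotProduct_mulVec_nonneg (Sum.elim u v)
  rw [star_trivial, fromBlocks_mulVec, Sum.elim_comp_inl, Sum.elim_comp_inr,
    sumElim_dotProduct_sumElim, dotProduct_add, dotProduct_add,
    dotProduct_transpose_mulVec] at h
  linarith

theorem PosDef.exists_mul_norm_sq_le [Nonempty n] {P : Matrix n n ℝ} (hP : P.PosDef) :
    ∃ c > 0, ∀ x : n → ℝ, c * ‖x‖ ^ 2 ≤ x ⬝ᵥ P *ᵥ x := by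
  have hq : Continuous fun x : n → ℝ => x ⬝ᵥ P *ᵥ x :=
    continuous_id.dotProduct (continuous_const.matrix_mulVec continuous_id)
  obtain ⟨x₀, hx₀, hmin⟩ := (isCompact_sphere (0 : n → ℝ) 1).exists_isMinOn
    (NormedSpace.sphere_nonempty.mpr zero_le_one) hq.continuousOn
  have hx₀ : x₀ ≠ 0 := ne_zero_of_mem_unit_sphere ⟨x₀, hx₀⟩
  refine ⟨_, star_trivial x₀ ▸ hP.dotProduct_mulVec_pos hx₀, fun x => ?_⟩
  rcases eq_or_ne x 0 with rfl | hx
  · simp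
  have hnx : 0 < ‖x‖ := norm_pos_iff.mpr hx
  have h := isMinOn_iff.mp hmin (‖x‖⁻¹ • x) (by simp [norm_smul, hnx.ne'])
  simp only [mulVec_smul, smul_dotProduct, dotProduct_smul, smul_eq_mul] at h
  calc _ ≤ ‖x‖⁻¹ * (‖x‖⁻¹ * (x ⬝ᵥ P *ᵥ x)) * ‖x‖ ^ 2 := by gcongr
    _ = x ⬝ᵥ P *ᵥ x := by field_simp

variable [DecidableEq n]

theorem isUnit_of_posDef_add_transpose {Z : Matrix n n ℝ} (h : (Z + Zᵀ).PosDef) :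
    IsUnit Z := by
  rw [isUnit_iff_isUnit_det, isUnit_iff_ne_zero, Ne, ← exists_mulVec_eq_zero_iff]
  rintro ⟨v, hv0, hv⟩
  have h := h.dotProduct_mulVec_pos hv0
  rw [star_trivial, add_mulVec, dotProduct_add, dotProduct_transpose_mulVec, hv,
    dotProduct_zero, add_zero] at h
  exact h.false

theorem PosDef.dotProduct_add_transpose_sub_mulVec_le {W : Matrix n n ℝ} (hW : W.PosDef)
    (Z : Matrix n n ℝ) (u : n → ℝ) :
    u ⬝ᵥ (Z + Zᵀ - W) *ᵥ u ≤ (Z *ᵥ u) ⬝ᵥ W⁻¹ *ᵥ (Z *ᵥ u) := by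
  have hWu : W⁻¹ *ᵥ (W *ᵥ u) = u := by
    rw [mulVec_mulVec, nonsing_inv_mul _ ((isUnit_iff_isUnit_det W).mp hW.isUnit), one_mulVec]
  have hWinv : W⁻¹ᵀ = W⁻¹ := by rw [← conjTranspose_eq_transpose_of_trivial, hW.inv.1]
  have h := hW.inv.posSemidef.dotProduct_mulVec_nonneg (Z *ᵥ u - W *ᵥ u)
  rw [star_trivial, mulVec_sub, hWu, sub_dotProduct, dotProduct_sub, dotProduct_sub,
    dotProduct_mulVec (W *ᵥ u) W⁻¹, ← mulVec_transpose, hWinv, hWu] at h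
  rw [sub_mulVec, add_mulVec, dotProduct_sub, dotProduct_add, dotProduct_transpose_mulVec]
  linarith [dotProduct_comm (Z *ᵥ u) u, dotProduct_comm (W *ᵥ u) u]

end Matrix

variable {m n : Type*} [Fintype m] [Fintype n]

theorem add_two_mul_dotProduct_sum_smul_mulVec_nonneg {ι : Type*} [Fintype ι]
    {σ : ι → ℝ} (hσ : ∀ j, 0 ≤ σ j) (hσ1 : ∑ j, σ j = 1) {B : ι → Matrix n m ℝ}
    {u : m → ℝ} {v : n → ℝ} {a b : ℝ} (h : ∀ j, 0 ≤ a + 2 * (v ⬝ᵥ B j *ᵥ u) + b) :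
    0 ≤ a + 2 * (v ⬝ᵥ (∑ j, σ j • B j) *ᵥ u) + b := by
  calc 0 ≤ ∑ j, σ j * (a + 2 * (v ⬝ᵥ B j *ᵥ u) + b) :=
        sum_nonneg fun j _ => mul_nonneg (hσ j) (h j)
    _ = a + 2 * (v ⬝ᵥ (∑ j, σ j • B j) *ᵥ u) + b := by
        simp only [sum_mulVec, smul_mulVec, dotProduct_sum, dotProduct_smul, smul_eq_mul,
          mul_add, sum_add_distrib, ← sum_mul, hσ1, mul_sum]
        ring_nf

theorem tendsto_zero_of_dotProduct_mulVec_le_mul [Nonempty n] {P : Matrix n n ℝ}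
    (hP : P.PosDef) {ρ : ℝ} (hρ0 : 0 ≤ ρ) (hρ1 : ρ < 1) {x : ℕ → n → ℝ}
    (hx : ∀ k, x (k + 1) ⬝ᵥ P *ᵥ x (k + 1) ≤ ρ * (x k ⬝ᵥ P *ᵥ x k)) :
    Tendsto x atTop (nhds 0) := by
  obtain ⟨c, hc, hcP⟩ := hP.exists_mul_norm_sq_le
  have hV (k : ℕ) : x k ⬝ᵥ P *ᵥ x k ≤ ρ ^ k * (x 0 ⬝ᵥ P *ᵥ x 0) := by
    induction k with
    | zero => simp
    | succ k ih => calc _ ≤ ρ * (x k ⬝ᵥ P *ᵥ x k) := hx k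
        _ ≤ ρ * (ρ ^ k * (x 0 ⬝ᵥ P *ᵥ x 0)) := by gcongr
        _ = _ := by ring
  have hgeom : Tendsto (fun k => ρ ^ k * (x 0 ⬝ᵥ P *ᵥ x 0 / c)) atTop (nhds 0) := by
    simpa using (tendsto_pow_atTop_nhds_zero_of_lt_one hρ0 hρ1).mul_const _
  have hsq : Tendsto (fun k => ‖x k‖ ^ 2) atTop (nhds 0) := by
    refine squeeze_zero (fun k => by positivity) (fun k => ?_) hgeom
    rw [mul_div_assoc', le_div_iff₀ hc, mul_comm]
    exact (hcP (x k)).trans (hV k)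
  exact tendsto_zero_iff_norm_tendsto_zero.mpr (by simpa using hsq.sqrt)

theorem dotProduct_inv_mulVec_le_of_lmi [DecidableEq n] {W Z A : Matrix n n ℝ} {μ : ℝ}
    (hW : W.PosDef) (hμ1 : μ < 1) (hZ : IsUnit Z)
    (hL : ∀ u v, 0 ≤ u ⬝ᵥ (Z + Zᵀ - W) *ᵥ u + 2 * (v ⬝ᵥ (A * Z) *ᵥ u) +
      v ⬝ᵥ ((1 - μ) • W) *ᵥ v) (y : n → ℝ) :
    (A *ᵥ y) ⬝ᵥ W⁻¹ *ᵥ (A *ᵥ y) ≤ (1 - μ) * (y ⬝ᵥ W⁻¹ *ᵥ y) := by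
  obtain ⟨u, rfl⟩ := mulVec_surjective_iff_isUnit.mpr hZ y
  have h1μ : 1 - μ ≠ 0 := (sub_pos.mpr hμ1).ne'
  set a := A *ᵥ (Z *ᵥ u)
  set q := a ⬝ᵥ W⁻¹ *ᵥ a
  set c := (1 - μ)⁻¹
  have hWa : W *ᵥ (W⁻¹ *ᵥ a) = a := by
    rw [mulVec_mulVec, mul_nonsing_inv _ ((isUnit_iff_isUnit_det W).mp hW.isUnit), one_mulVec]
  -- the minimiser in `v` of the form `hL u v`
  set v := -c • W⁻¹ *ᵥ a
  have hcross : v ⬝ᵥ (A * Z) *ᵥ u = -c * q := by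
    rw [← mulVec_mulVec, smul_dotProduct, dotProduct_comm, smul_eq_mul]
  have hdiag : v ⬝ᵥ ((1 - μ) • W) *ᵥ v = c * q := by
    rw [smul_mulVec, mulVec_smul, hWa, smul_dotProduct, dotProduct_smul, dotProduct_smul,
      dotProduct_comm, smul_eq_mul, smul_eq_mul, smul_eq_mul]
    linear_combination (c * q) * inv_mul_cancel₀ h1μ
  have h := hL u v
  rw [hcross, hdiag] at h
  have hu := hW.dotProduct_add_transpose_sub_mulVec_le Z u
  calc q = (1 - μ) * (c * q) := by rw [← mul_assoc, mul_inv_cancel₀ h1μ, one_mul]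
    _ ≤ (1 - μ) * ((Z *ᵥ u) ⬝ᵥ W⁻¹ *ᵥ (Z *ᵥ u)) := by
      gcongr
      linarith

theorem stmt_6_general (p : ℕ) (r : ℕ) (hr : 0 < r)
    (SM : Fin r → Matrix (Fin 3 ⊕ Fin p) (Fin 3 ⊕ Fin p) ℝ)
    (SH : Fin r → Matrix (Fin 3 ⊕ Fin p) (Fin 1) ℝ)
    (W : Matrix (Fin 3 ⊕ Fin p) (Fin 3 ⊕ Fin p) ℝ) (hW : W.PosDef)
    (Y : Matrix (Fin 1) (Fin 3) ℝ)
    (Z1 : Matrix (Fin 3) (Fin 3) ℝ) (Z2 : Matrix (Fin p) (Fin 3) ℝ)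
    (Z3 : Matrix (Fin p) (Fin p) ℝ)
    (μ : ℝ) (hμ : 0 < μ) (hμ1 : μ < 1)
    (hLMI : ∀ j, (Matrix.fromBlocks
      (Matrix.fromBlocks Z1 0 Z2 Z3 + (Matrix.fromBlocks Z1 0 Z2 Z3)ᵀ - W)
      ((Matrix.fromBlocks Z1 0 Z2 Z3)ᵀ * (SM j)ᵀ -
        (Matrix.fromCols Y (0 : Matrix (Fin 1) (Fin p) ℝ))ᵀ * (SH j)ᵀ)
      (SM j * Matrix.fromBlocks Z1 0 Z2 Z3 -
        SH j * Matrix.fromCols Y (0 : Matrix (Fin 1) (Fin p) ℝ))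
      ((1 - μ) • W)).PosDef) :
    IsUnit Z1 ∧
    ∀ σ : ℕ → Fin r → ℝ, (∀ k j, 0 ≤ σ k j) → (∀ k, (∑ j, σ k j) = 1) →
    ∀ (x₀ : Fin 3 ⊕ Fin p → ℝ) (x : ℕ → Fin 3 ⊕ Fin p → ℝ), x 0 = x₀ →
    (∀ k, x (k + 1) =
      ((∑ j, σ k j • SM j) - (∑ j, σ k j • SH j) *
        Matrix.fromCols (Y * Z1⁻¹) (0 : Matrix (Fin 1) (Fin p) ℝ)).mulVec (x k)) →
    Tendsto x atTop (nhds 0) := by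
  set Z := fromBlocks Z1 0 Z2 Z3
  set Yb := fromCols Y (0 : Matrix (Fin 1) (Fin p) ℝ)
  have hvertex (j u v) : 0 ≤ u ⬝ᵥ (Z + Zᵀ - W) *ᵥ u +
      2 * (v ⬝ᵥ (SM j * Z - SH j * Yb) *ᵥ u) + v ⬝ᵥ ((1 - μ) • W) *ᵥ v := by
    have h := (hLMI j).posSemidef
    rw [← transpose_mul, ← transpose_mul, ← transpose_sub] at h
    exact h.dotProduct_fromBlocks_transpose_nonneg u v
  have hZW : (Z + Zᵀ - W).PosDef := (hLMI ⟨0, hr⟩).submatrix Sum.inl_injective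
  have hZ : (Z + Zᵀ).PosDef := by simpa using hZW.add hW
  have hZ1 : IsUnit Z1 := isUnit_of_posDef_add_transpose (hZ.submatrix Sum.inl_injective)
  refine ⟨hZ1, fun σ hσ hσ1 _ x _ hx => ?_⟩
  have hKZ : fromCols (Y * Z1⁻¹) (0 : Matrix (Fin 1) (Fin p) ℝ) * Z = Yb := by
    rw [fromCols_mul_fromBlocks, Matrix.mul_assoc,
      nonsing_inv_mul _ ((isUnit_iff_isUnit_det Z1).mp hZ1)]
    simp [Yb]
  refine tendsto_zero_of_dotProduct_mulVec_le_mul hW.inv (sub_nonneg.mpr hμ1.le)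
    (sub_lt_self 1 hμ) fun k => ?_
  rw [hx k]
  refine dotProduct_inv_mulVec_le_of_lmi hW hμ1 (isUnit_of_posDef_add_transpose hZ)
    (fun u v => ?_) (x k)
  have hAZ : ((∑ j, σ k j • SM j) - (∑ j, σ k j • SH j) *
      fromCols (Y * Z1⁻¹) (0 : Matrix (Fin 1) (Fin p) ℝ)) * Z =
      ∑ j, σ k j • (SM j * Z - SH j * Yb) := by
    rw [sub_mul, Matrix.mul_assoc, hKZ]
    simp only [smul_sub, sum_sub_distrib, Matrix.sum_mul, Matrix.smul_mul]
  rw [hAZ]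
  exact add_two_mul_dotProduct_sum_smul_mulVec_nonneg (hσ k) (hσ1 k) (hvertex · u v)

/-- Theorem 1: the LMI-based controller synthesis condition at the vertices of the
polytopic overapproximation yields a structured state-feedback gain
`K̄ = [K 0]` with `K = 𝒴 𝒵₁⁻¹` rendering the origin of the uncertain
closed-loop platoon system globally asymptotically stable. -/
theorem stmt_6 (p : ℕ) (hp : 1 ≤ p) (r : ℕ) (hr : 0 < r)
    (SM : Fin r → Matrix (Fin 3 ⊕ Fin p) (Fin 3 ⊕ Fin p) ℝ)
    (SH : Fin r → Matrix (Fin 3 ⊕ Fin p) (Fin 1) ℝ)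
    (W : Matrix (Fin 3 ⊕ Fin p) (Fin 3 ⊕ Fin p) ℝ) (hW : W.PosDef)
    (Y : Matrix (Fin 1) (Fin 3) ℝ)
    (Z1 : Matrix (Fin 3) (Fin 3) ℝ) (Z2 : Matrix (Fin p) (Fin 3) ℝ)
    (Z3 : Matrix (Fin p) (Fin p) ℝ)
    (μ : ℝ) (hμ : 0 < μ) (hμ1 : μ < 1)
    (hLMI : ∀ j, (Matrix.fromBlocks
      (Matrix.fromBlocks Z1 0 Z2 Z3 + (Matrix.fromBlocks Z1 0 Z2 Z3)ᵀ - W)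
      ((Matrix.fromBlocks Z1 0 Z2 Z3)ᵀ * (SM j)ᵀ -
        (Matrix.fromCols Y (0 : Matrix (Fin 1) (Fin p) ℝ))ᵀ * (SH j)ᵀ)
      (SM j * Matrix.fromBlocks Z1 0 Z2 Z3 -
        SH j * Matrix.fromCols Y (0 : Matrix (Fin 1) (Fin p) ℝ))
      ((1 - μ) • W)).PosDef) :
    IsUnit Z1 ∧
    ∀ σ : ℕ → Fin r → ℝ, (∀ k j, 0 ≤ σ k j) → (∀ k, (∑ j, σ k j) = 1) →
    ∀ (x₀ : Fin 3 ⊕ Fin p → ℝ) (x : ℕ → Fin 3 ⊕ Fin p → ℝ), x 0 = x₀ →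
    (∀ k, x (k + 1) =
      ((∑ j, σ k j • SM j) - (∑ j, σ k j • SH j) *
        Matrix.fromCols (Y * Z1⁻¹) (0 : Matrix (Fin 1) (Fin p) ℝ)).mulVec (x k)) →
    Tendsto x atTop (nhds 0) :=
  stmt_6_general p r hr SM SH W hW Y Z1 Z2 Z3 μ hμ hμ1 hLMI
end

section
/- Let ζ > 0, let v, a : ℝ → ℝ be differentiable functions with v(s) > 0 for all s, let v_ref : ℝ → ℝ be positive and twice differentiable, let û : ℝ → ℝ, and define the control input u(s) = a(s) + 3ζ·a(s)²/v(s) − ζ·v(s)⁴·((1/v_ref)″(s) + û(s)). Assume the disturbance-free spatial vehicle dynamics v′(s) = a(s)/v(s) and a′(s) = −a(s)/(ζ·v(s)) + u(s)/(ζ·v(s)) hold for all s. Define δ₁(s) = 1/v(s) − 1/v_ref(s) and δ₂(s) = δ₁′(s). Then δ₂ is differentiable and δ₂′(s) = û(s) for all s; that is, the error vector δ = (δ₁, δ₂) satisfies the linear dynamics δ′ = A·δ + B·û with A = [[0, 1], [0, 0]] and B = (0, 1)ᵀ. -/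
/-!
Along the dynamics `v' = a / v` one has `(1 / v)' = -a / v³`, so `δ₂ = -a / v³ - (1 / v_ref)'`.
Differentiating once more, `(a / v³)' = a' / v³ - 3 a² / v⁵`, and the feedback law is chosen so that
`a' = (u - a) / (ζ v)` turns this into exactly `-((1 / v_ref)'' + û)`; the `(1 / v_ref)''` terms
then cancel in `δ₂'`.
-/

section SpatialDynamics

variable {v a : ℝ → ℝ} {s : ℝ}

theorem hasDerivAt_one_div_of_hasDerivAt_div (hv : HasDerivAt v (a s / v s) s) (hvs : v s ≠ 0) :
    HasDerivAt (fun t => 1 / v t) (-(a s / v s ^ 3)) s := by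
  simp only [one_div]
  exact (hv.fun_inv hvs).congr_deriv (by field_simp)

theorem hasDerivAt_div_pow_three_of_hasDerivAt_div {a' : ℝ} (hv : HasDerivAt v (a s / v s) s)
    (ha : HasDerivAt a a' s) (hvs : v s ≠ 0) :
    HasDerivAt (fun t => a t / v t ^ 3) (a' / v s ^ 3 - 3 * a s ^ 2 / v s ^ 5) s :=
  (ha.fun_div (hv.fun_pow 3) (pow_ne_zero 3 hvs)).congr_deriv (by field_simp; ring)

end SpatialDynamics

theorem linearizing_feedback_cancel {ζ v a w : ℝ} (hζ : ζ ≠ 0) (hv : v ≠ 0) :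
    (-a / (ζ * v) + (a + 3 * ζ * a ^ 2 / v - ζ * v ^ 4 * w) / (ζ * v)) / v ^ 3
      - 3 * a ^ 2 / v ^ 5 = -w := by
  field_simp
  ring

/-- Input–output linearization of the spatial-domain vehicle dynamics: the
feedback law `u` transforms the nonlinear dynamics into a double integrator in
the velocity tracking error coordinates `(δ₁, δ₂)` with virtual input `û`. -/
theorem stmt_12 (ζ : ℝ) (hζ : 0 < ζ) (v a vref uhat u : ℝ → ℝ)
    (hv : ∀ s, 0 < v s) (hvref : ∀ s, 0 < vref s) (hvrefC2 : ContDiff ℝ 2 vref)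
    (hu : ∀ s, u s = a s + 3 * ζ * (a s) ^ 2 / v s
      - ζ * (v s) ^ 4 * (deriv (deriv fun t => 1 / vref t) s + uhat s))
    (hvdyn : ∀ s, HasDerivAt v (a s / v s) s)
    (hadyn : ∀ s, HasDerivAt a (-(a s) / (ζ * v s) + u s / (ζ * v s)) s)
    (δ₁ δ₂ : ℝ → ℝ)
    (hδ₁ : δ₁ = fun s => 1 / v s - 1 / vref s)
    (hδ₂ : δ₂ = deriv δ₁) :
    ∀ s : ℝ, HasDerivAt δ₁ (δ₂ s) s ∧ HasDerivAt δ₂ (uhat s) s := by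
  set f : ℝ → ℝ := fun t => 1 / vref t
  have hf : ContDiff ℝ 2 f := contDiff_const.div hvrefC2 fun t => (hvref t).ne'
  have hδ₁' : ∀ s, HasDerivAt δ₁ (-(a s / v s ^ 3) - deriv f s) s := fun s => by
    rw [hδ₁]
    exact (hasDerivAt_one_div_of_hasDerivAt_div (hvdyn s) (hv s).ne').sub
      ((hf.differentiable two_ne_zero) s).hasDerivAt
  have hδ₂_eq : δ₂ = fun s => -(a s / v s ^ 3) - deriv f s := by
    funext s
    rw [hδ₂, (hδ₁' s).deriv]
  intro s
  refine ⟨hδ₂_eq ▸ hδ₁' s, ?_⟩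
  have hδ₂' := ((hasDerivAt_div_pow_three_of_hasDerivAt_div (hvdyn s) (hadyn s) (hv s).ne').neg).sub
    (hf.differentiable_deriv_two s).hasDerivAt
  rw [hu s, linearizing_feedback_cancel hζ.ne' (hv s).ne', neg_neg, add_sub_cancel_left] at hδ₂'
  rwa [hδ₂_eq]
end

section
/- Let ε > 0 and 0 ≤ ε₀ < 1. Let Γ, Γ⁰ₚ, δ₁, δ₁ₚ, δ₁₀, δ₂, δ₂ₚ, δ₂₀, ū : ℝ → ℝ be differentiable functions satisfying δ₁′ = δ₂, δ₁ₚ′ = δ₂ₚ, δ₁₀′ = δ₂₀, Γ′ = δ₁ − δ₁ₚ, and (Γ⁰ₚ)′ = δ₁ₚ − δ₁₀, and suppose δ₂′(s) = −ε⁻¹(1−ε₀)(δ₂(s) − δ₂ₚ(s)) − ε⁻¹ε₀(δ₂(s) − δ₂₀(s)) + ū(s) for all s. Define Γ⁰ = Γ + Γ⁰ₚ, E₁ = (1−ε₀)·Γ + ε₀·Γ⁰ + ε·δ₁, E₂ = E₁′, and yₚ = −ε₀·Γ⁰ₚ − ε·δ₁ₚ. Then the state vector x = (Γ, E₁, E₂)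 satisfies the linear dynamics x′(s) = Ā₀·x(s) + B̄₁·ū(s) + B̄₂·yₚ(s) for all s, where Ā₀ = [[−ε⁻¹, ε⁻¹, 0], [0, 0, 1], [0, 0, 0]], B̄₁ = (0, 0, ε)ᵀ, and B̄₂ = (ε⁻¹, 0, 0)ᵀ. -/
/-!
Write `E₁ = Γ + ε₀ Γ⁰ₚ + ε δ₁`. Its derivative is
`E₂ = δ₁ - δ₁ₚ + ε₀ (δ₁ₚ - δ₁₀) + ε δ₂`, and substituting the closed-loop law for `ε δ₂′`
makes every velocity error in `E₂′` cancel, leaving `E₂′ = ε ū`. Finally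
`E₁ - Γ + yₚ = ε (δ₁ - δ₁ₚ) = ε Γ′`, which is the first row of the model.
-/

lemma platoon_rhs_eq (ε a b c u y : ℝ) :
    (!![-ε⁻¹, ε⁻¹, 0; 0, 0, 1; 0, 0, 0] : Matrix (Fin 3) (Fin 3) ℝ).mulVec ![a, b, c]
        + u • ![0, 0, ε] + y • ![ε⁻¹, 0, 0] = ![ε⁻¹ * (b - a + y), c, ε * u] := by
  ext i
  fin_cases i <;> simp [Matrix.vecHead, Matrix.vecTail] <;> ring

section Platoon

variable {ε ε₀ : ℝ} {Γ Γ0p δ₁ δ₁p δ₁0 δ₂ δ₂p δ₂0 ubar : ℝ → ℝ} {s : ℝ}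

lemma hasDerivAt_timeGapError (hδ₁ : HasDerivAt δ₁ (δ₂ s) s)
    (hΓ : HasDerivAt Γ (δ₁ s - δ₁p s) s) (hΓ0p : HasDerivAt Γ0p (δ₁p s - δ₁0 s) s) :
    HasDerivAt (fun s => (1 - ε₀) * Γ s + ε₀ * (Γ s + Γ0p s) + ε * δ₁ s)
      (δ₁ s - δ₁p s + ε₀ * (δ₁p s - δ₁0 s) + ε * δ₂ s) s :=
  (((hΓ.const_mul (1 - ε₀)).add ((hΓ.add hΓ0p).const_mul ε₀)).add
    (hδ₁.const_mul ε)).congr_deriv (by ring)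

lemma hasDerivAt_timeGapError_deriv (hε : ε ≠ 0) (hδ₁ : HasDerivAt δ₁ (δ₂ s) s)
    (hδ₁p : HasDerivAt δ₁p (δ₂p s) s) (hδ₁0 : HasDerivAt δ₁0 (δ₂0 s) s)
    (hδ₂ : HasDerivAt δ₂
      (-ε⁻¹ * (1 - ε₀) * (δ₂ s - δ₂p s) - ε⁻¹ * ε₀ * (δ₂ s - δ₂0 s) + ubar s) s) :
    HasDerivAt (fun s => δ₁ s - δ₁p s + ε₀ * (δ₁p s - δ₁0 s) + ε * δ₂ s) (ε * ubar s) s := by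
  refine (((hδ₁.sub hδ₁p).add ((hδ₁p.sub hδ₁0).const_mul ε₀)).add
    (hδ₂.const_mul ε)).congr_deriv ?_
  field_simp
  ring

lemma timingError_rate_eq (hε : ε ≠ 0) :
    δ₁ s - δ₁p s = ε⁻¹ * ((1 - ε₀) * Γ s + ε₀ * (Γ s + Γ0p s) + ε * δ₁ s - Γ s
      + (-ε₀ * Γ0p s - ε * δ₁p s)) := by
  field_simp
  ring

end Platoon

theorem stmt_13_general (ε ε₀ : ℝ) (hε : 0 < ε)
    (Γ Γ0p δ₁ δ₁p δ₁0 δ₂ δ₂p δ₂0 ubar : ℝ → ℝ)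
    (hδ₁ : ∀ s, HasDerivAt δ₁ (δ₂ s) s)
    (hδ₁p : ∀ s, HasDerivAt δ₁p (δ₂p s) s)
    (hδ₁0 : ∀ s, HasDerivAt δ₁0 (δ₂0 s) s)
    (hΓ : ∀ s, HasDerivAt Γ (δ₁ s - δ₁p s) s)
    (hΓ0p : ∀ s, HasDerivAt Γ0p (δ₁p s - δ₁0 s) s)
    (hδ₂ : ∀ s, HasDerivAt δ₂
      (-ε⁻¹ * (1 - ε₀) * (δ₂ s - δ₂p s) - ε⁻¹ * ε₀ * (δ₂ s - δ₂0 s) + ubar s) s)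
    (Γ0 E₁ E₂ yp : ℝ → ℝ)
    (hΓ0 : Γ0 = fun s => Γ s + Γ0p s)
    (hE₁ : E₁ = fun s => (1 - ε₀) * Γ s + ε₀ * Γ0 s + ε * δ₁ s)
    (hE₂ : E₂ = deriv E₁)
    (hyp : yp = fun s => -ε₀ * Γ0p s - ε * δ₁p s)
    (x : ℝ → Fin 3 → ℝ) (hx : x = fun s => ![Γ s, E₁ s, E₂ s]) :
    ∀ s : ℝ, HasDerivAt x
      ((!![-ε⁻¹, ε⁻¹, 0; 0, 0, 1; 0, 0, 0] : Matrix (Fin 3) (Fin 3) ℝ).mulVec (x s)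
        + ubar s • ![0, 0, ε] + yp s • ![ε⁻¹, 0, 0]) s := by
  intro s
  subst hx hyp hE₂ hE₁ hΓ0
  have hE₁' := fun t => hasDerivAt_timeGapError (ε := ε) (ε₀ := ε₀) (hδ₁ t) (hΓ t) (hΓ0p t)
  have hE₂ := funext fun t => (hE₁' t).deriv
  simp only [hE₂, platoon_rhs_eq]
  rw [← timingError_rate_eq hε.ne']
  exact (hΓ s).finCons ((hE₁' s).finCons
    ((hasDerivAt_timeGapError_deriv hε.ne' (hδ₁ s) (hδ₁p s) (hδ₁0 s) (hδ₂ s)).finCons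
      ((hasDerivAt_const s ![]).congr_deriv (Subsingleton.elim _ _))))

/-- The disturbance-free state-space platoon model in timing error coordinates
`x = (Γ, E₁, E₂)`: `x′ = Ā₀ x + B̄₁ ū + B̄₂ yₚ`. -/
theorem stmt_13 (ε ε₀ : ℝ) (hε : 0 < ε) (hε₀0 : 0 ≤ ε₀) (hε₀1 : ε₀ < 1)
    (Γ Γ0p δ₁ δ₁p δ₁0 δ₂ δ₂p δ₂0 ubar : ℝ → ℝ)
    (hδ₁ : ∀ s, HasDerivAt δ₁ (δ₂ s) s)
    (hδ₁p : ∀ s, HasDerivAt δ₁p (δ₂p s) s)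
    (hδ₁0 : ∀ s, HasDerivAt δ₁0 (δ₂0 s) s)
    (hΓ : ∀ s, HasDerivAt Γ (δ₁ s - δ₁p s) s)
    (hΓ0p : ∀ s, HasDerivAt Γ0p (δ₁p s - δ₁0 s) s)
    (hδ₂ : ∀ s, HasDerivAt δ₂
      (-ε⁻¹ * (1 - ε₀) * (δ₂ s - δ₂p s) - ε⁻¹ * ε₀ * (δ₂ s - δ₂0 s) + ubar s) s)
    (Γ0 E₁ E₂ yp : ℝ → ℝ)
    (hΓ0 : Γ0 = fun s => Γ s + Γ0p s)
    (hE₁ : E₁ = fun s => (1 - ε₀) * Γ s + ε₀ * Γ0 s + ε * δ₁ s)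
    (hE₂ : E₂ = deriv E₁)
    (hyp : yp = fun s => -ε₀ * Γ0p s - ε * δ₁p s)
    (x : ℝ → Fin 3 → ℝ) (hx : x = fun s => ![Γ s, E₁ s, E₂ s]) :
    ∀ s : ℝ, HasDerivAt x
      ((!![-ε⁻¹, ε⁻¹, 0; 0, 0, 1; 0, 0, 0] : Matrix (Fin 3) (Fin 3) ℝ).mulVec (x s)
        + ubar s • ![0, 0, ε] + yp s • ![ε⁻¹, 0, 0]) s :=
  stmt_13_general ε ε₀ hε Γ Γ0p δ₁ δ₁p δ₁0 δ₂ δ₂p δ₂0 ubar hδ₁ hδ₁p hδ₁0 hΓ hΓ0p hδ₂ Γ0 E₁ E₂ yp hΓ0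
    hE₁ hE₂ hyp x hx
end

section
/- Let p ≥ 1 and set N = 3 + p. Let r be a positive natural number and let S_{M,1}, …, S_{M,r} be real N×N matrices and S_{H,1}, …, S_{H,r} be real N×1 matrices; let C be a real 1×N matrix, 𝓛 a real N×1 matrix, and 𝓖 a real N×2 matrix. Suppose there exist a symmetric positive definite real N×N matrix 𝒲̃, a real 1×3 matrix 𝒴̃, an invertible real N×N matrix 𝒵̃ with block lower-triangular structure 𝒵̃ = [[𝒵̃₁, 0], [𝒵̃₂, 𝒵̃₃]] where 𝒵̃₁ is 3×3 and invertible, and scalars 0 < σ ≤ 1, γ > 0, 0 < a ≤ 1, b > 0, such that, setting K = 𝒴̃·𝒵̃₁⁻¹, K̄ = [K 0] ∈ ℝ^{1×N}, and Ω̃_j = (S_{M,j} − S_{H,j}·K̄)·𝒵̃, for each j ∈ {1, …, r} both block matrices [[a(𝒵̃ᵀ + 𝒵̃ − 𝒲̃), Ω̃_jᵀ, 0, 𝒵̃ᵀ·Cᵀ], [Ω̃_j, 𝒲̃, 𝓛, 0], [0, 𝓛ᵀ, bσ·I₁, 0], [C·𝒵̃, 0, 0, (1/b)·I₁]] and [[a(𝒵̃ᵀ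 + 𝒵̃ − 𝒲̃), Ω̃_jᵀ, 0, 𝒵̃ᵀ·Cᵀ], [Ω̃_j, 𝒲̃, 𝓖, 0], [0, 𝓖ᵀ, bγ·I₂, 0], [C·𝒵̃, 0, 0, (1/b)·I₁]] are positive semidefinite. Then for every sequence of weight vectors (σ(k))_{k∈ℕ} with σ_j(k) ≥ 0 and Σ_{j=1}^r σ_j(k) = 1 for all k, writing M_k = Σ_j σ_j(k)·S_{M,j} and H_k = Σ_j σ_j(k)·S_{H,j}: (i) for every sequence w : ℕ → ℝ, the solution of X_{k+1} = (M_k − H_k·K̄)·X_k + 𝓛·w_k with X₀ = 0 and output y_k = C·X_k satisfies Σ_{k=0}^{K−1} y_k² ≤ σ·Σ_{k=0}^{K−1} w_k² for every K ∈ ℕ; and (ii) for every sequence d : ℕ → ℝ², the solution of X_{k+1} = (M_k − H_k·K̄)·X_k + 𝓖·d_k with X₀ = 0 and output y_k = C·X_k satisfies Σ_{k=0}^{K−1} y_k² ≤ γ·Σ_{k=0}^{K−1} ‖d_k‖² for every K ∈ ℕ. -/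
/-!
The quadratic storage function `V x = xᵀ W⁻¹ x` certifies both gains. The LMI is affine in
`Ω = A Z`, so feasibility at the vertices gives it at every convex combination `A_k Z`. Testing
the LMI against `(Z⁻¹ x, -W⁻¹ x⁺, w, -b y)` and using `a (Zᵀ + Z - W) ≤ Zᵀ W⁻¹ Z` (which is
`(Z - W)ᵀ W⁻¹ (Z - W) ≥ 0`) yields `V x⁺ + b ‖y‖² ≤ V x + b c ‖w‖²`; summing from `X 0 = 0`
gives the ℓ₂ bound.
-/

open Matrix Finset

lemma sum_range_le_sum_range_of_dissipation {V g h : ℕ → ℝ} (hV0 : V 0 = 0)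
    (hV : ∀ k, 0 ≤ V k) (hstep : ∀ k, V (k + 1) + g k ≤ V k + h k) (N : ℕ) :
    ∑ k ∈ range N, g k ≤ ∑ k ∈ range N, h k := by
  have hsupply : ∀ N, V N + ∑ k ∈ range N, g k ≤ ∑ k ∈ range N, h k := by
    intro N
    induction N with
    | zero => simp [hV0]
    | succ N ih =>
      rw [sum_range_succ, sum_range_succ]
      linarith [hstep N]
  linarith [hsupply N, hV N]

section BoundedReal

variable {n κ ρ : Type*} [Fintype n] [DecidableEq κ] [DecidableEq ρ]

/-- The paper's (49) with `c = σ`, `B = 𝓛` and (50) with `c = γ`, `B = 𝓖`; `Ω` stands for `A Z`. -/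
noncomputable def boundedRealLMI (a b c : ℝ) (W Z Ω : Matrix n n ℝ) (B : Matrix n κ ℝ)
    (C : Matrix ρ n ℝ) :
    Matrix ((n ⊕ n) ⊕ (κ ⊕ ρ)) ((n ⊕ n) ⊕ (κ ⊕ ρ)) ℝ :=
  fromBlocks (fromBlocks (a • (Zᵀ + Z - W)) Ωᵀ Ω W) (fromBlocks 0 (Zᵀ * Cᵀ) B 0)
    (fromBlocks 0 Bᵀ (C * Z) 0) (fromBlocks ((b * c) • 1) 0 0 ((1 / b) • 1))

lemma boundedRealLMI_sum_smul {ι : Type*} (a b c : ℝ) (W Z : Matrix n n ℝ) (B : Matrix n κ ℝ)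
    (C : Matrix ρ n ℝ) (s : Finset ι) (t : ι → ℝ) (ht : ∑ i ∈ s, t i = 1)
    (Ω : ι → Matrix n n ℝ) :
    boundedRealLMI a b c W Z (∑ i ∈ s, t i • Ω i) B C
      = ∑ i ∈ s, t i • boundedRealLMI a b c W Z (Ω i) B C := by
  ext i j
  rcases i with (i | i) | i <;> rcases j with (j | j) | j <;>
    simp [boundedRealLMI, Matrix.sum_apply, ← Finset.sum_mul, ht]

lemma posSemidef_boundedRealLMI_sum_smul {ι : Type*} {a b c : ℝ} {W Z : Matrix n n ℝ}
    {B : Matrix n κ ℝ} {C : Matrix ρ n ℝ} {s : Finset ι} {t : ι → ℝ} {Ω : ι → Matrix n n ℝ}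
    (ht0 : ∀ i ∈ s, 0 ≤ t i) (ht : ∑ i ∈ s, t i = 1)
    (hΩ : ∀ i ∈ s, (boundedRealLMI a b c W Z (Ω i) B C).PosSemidef) :
    (boundedRealLMI a b c W Z (∑ i ∈ s, t i • Ω i) B C).PosSemidef := by
  rw [boundedRealLMI_sum_smul a b c W Z B C s t ht]
  exact posSemidef_sum s fun i hi => (hΩ i hi).smul (ht0 i hi)

variable [Fintype κ] [Fintype ρ]

lemma dotProduct_boundedRealLMI_mulVec (a b c : ℝ) (W Z Ω : Matrix n n ℝ) (B : Matrix n κ ℝ)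
    (C : Matrix ρ n ℝ) (u s : n → ℝ) (w : κ → ℝ) (t : ρ → ℝ) :
    let v := Sum.elim (Sum.elim u s) (Sum.elim w t)
    v ⬝ᵥ (boundedRealLMI a b c W Z Ω B C *ᵥ v)
      = a * (u ⬝ᵥ ((Zᵀ + Z - W) *ᵥ u)) + 2 * (s ⬝ᵥ (Ω *ᵥ u)) + s ⬝ᵥ (W *ᵥ s)
        + 2 * (s ⬝ᵥ (B *ᵥ w)) + 2 * (t ⬝ᵥ (C *ᵥ (Z *ᵥ u))) + b * c * (w ⬝ᵥ w)
        + 1 / b * (t ⬝ᵥ t) := by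
  simp only [boundedRealLMI, fromBlocks_mulVec, sumElim_dotProduct_sumElim, zero_mulVec,
    add_zero, zero_add, smul_mulVec, one_mulVec, dotProduct_smul, smul_eq_mul, dotProduct_add,
    Sum.elim_comp_inl, Sum.elim_comp_inr, ← transpose_mul, dotProduct_transpose_mulVec,
    mulVec_mulVec]
  ring

variable [DecidableEq n]

lemma _root_.Matrix.PosDef.dotProduct_transpose_add_sub_mulVec_le {W : Matrix n n ℝ}
    (hW : W.PosDef) (Z : Matrix n n ℝ) (u : n → ℝ) :
    u ⬝ᵥ ((Zᵀ + Z - W) *ᵥ u) ≤ (Z *ᵥ u) ⬝ᵥ (W⁻¹ *ᵥ (Z *ᵥ u)) := by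
  have hWinv : W⁻¹ᵀ = W⁻¹ := by
    simpa [conjTranspose_eq_transpose_of_trivial] using hW.inv.isHermitian.eq
  have hsymm : ∀ x y : n → ℝ, x ⬝ᵥ (W⁻¹ *ᵥ y) = (W⁻¹ *ᵥ x) ⬝ᵥ y := fun x y => by
    rw [dotProduct_mulVec, ← mulVec_transpose, hWinv]
  have hWu : W⁻¹ *ᵥ (W *ᵥ u) = u := by
    rw [mulVec_mulVec, nonsing_inv_mul W <| (isUnit_iff_isUnit_det W).mp hW.isUnit, one_mulVec]
  have h := hW.inv.posSemidef.dotProduct_mulVec_nonneg (Z *ᵥ u - W *ᵥ u)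
  simp only [star_trivial, mulVec_sub, dotProduct_sub, sub_dotProduct, hWu] at h
  rw [hsymm (W *ᵥ u), hWu, dotProduct_comm (Z *ᵥ u) u, dotProduct_comm (W *ᵥ u) u] at h
  rw [sub_mulVec, add_mulVec, dotProduct_sub, dotProduct_add, mulVec_transpose,
    dotProduct_comm u (u ᵥ* Z), ← dotProduct_mulVec]
  linarith

lemma dissipation_of_posSemidef_boundedRealLMI {a b c : ℝ}
    {W Z A : Matrix n n ℝ} {B : Matrix n κ ℝ} {C : Matrix ρ n ℝ} (hW : W.PosDef) (hZ : IsUnit Z)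
    (ha0 : 0 ≤ a) (ha1 : a ≤ 1) (hb : 0 < b)
    (hLMI : (boundedRealLMI a b c W Z (A * Z) B C).PosSemidef) (x : n → ℝ) (w : κ → ℝ) :
    (A *ᵥ x + B *ᵥ w) ⬝ᵥ (W⁻¹ *ᵥ (A *ᵥ x + B *ᵥ w)) + b * ((C *ᵥ x) ⬝ᵥ (C *ᵥ x))
      ≤ x ⬝ᵥ (W⁻¹ *ᵥ x) + b * c * (w ⬝ᵥ w) := by
  set x' := A *ᵥ x + B *ᵥ w
  set y := C *ᵥ x
  obtain ⟨u, hu⟩ : ∃ u, Z *ᵥ u = x := ⟨Z⁻¹ *ᵥ x, by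
    rw [mulVec_mulVec, mul_nonsing_inv Z ((isUnit_iff_isUnit_det Z).mp hZ), one_mulVec]⟩
  have hWW : W * W⁻¹ = 1 := mul_nonsing_inv W <| (isUnit_iff_isUnit_det W).mp hW.isUnit
  -- `-W⁻¹ x'` completes the square in the `W` block, `-b y` in the `(1 / b) • 1` block.
  have hq := hLMI.dotProduct_mulVec_nonneg
    (Sum.elim (Sum.elim u (-(W⁻¹ *ᵥ x'))) (Sum.elim w (-b • y)))
  rw [star_trivial, dotProduct_boundedRealLMI_mulVec, ← mulVec_mulVec, hu] at hq
  have hstate : -(W⁻¹ *ᵥ x') ⬝ᵥ (A *ᵥ x) + -(W⁻¹ *ᵥ x') ⬝ᵥ (B *ᵥ w)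
      = -(x' ⬝ᵥ (W⁻¹ *ᵥ x')) := by
    rw [← dotProduct_add, neg_dotProduct, dotProduct_comm]
  have hstorage : -(W⁻¹ *ᵥ x') ⬝ᵥ (W *ᵥ -(W⁻¹ *ᵥ x')) = x' ⬝ᵥ (W⁻¹ *ᵥ x') := by
    rw [mulVec_neg, mulVec_mulVec, hWW, one_mulVec, neg_dotProduct_neg, dotProduct_comm]
  have hcross : (-b • y) ⬝ᵥ (C *ᵥ x) = -b * (y ⬝ᵥ y) := by
    rw [smul_dotProduct, smul_eq_mul]
  have hpenalty : 1 / b * ((-b • y) ⬝ᵥ (-b • y)) = b * (y ⬝ᵥ y) := by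
    rw [smul_dotProduct, dotProduct_smul, smul_eq_mul, smul_eq_mul]
    field_simp
  have hslack : a * (u ⬝ᵥ ((Zᵀ + Z - W) *ᵥ u)) ≤ x ⬝ᵥ (W⁻¹ *ᵥ x) := by
    have hV : 0 ≤ x ⬝ᵥ (W⁻¹ *ᵥ x) := by
      simpa using hW.inv.posSemidef.dotProduct_mulVec_nonneg x
    calc a * (u ⬝ᵥ ((Zᵀ + Z - W) *ᵥ u)) ≤ a * (x ⬝ᵥ (W⁻¹ *ᵥ x)) := by
          rw [← hu]
          exact mul_le_mul_of_nonneg_left (hW.dotProduct_transpose_add_sub_mulVec_le Z u) ha0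
      _ ≤ x ⬝ᵥ (W⁻¹ *ᵥ x) := mul_le_of_le_one_left hV ha1
  rw [hstorage, hcross, hpenalty] at hq
  linarith

lemma sum_range_dotProduct_le_of_posSemidef_boundedRealLMI {a b c : ℝ} {W Z : Matrix n n ℝ}
    {B : Matrix n κ ℝ} {C : Matrix ρ n ℝ} (hW : W.PosDef) (hZ : IsUnit Z)
    (ha0 : 0 ≤ a) (ha1 : a ≤ 1) (hb : 0 < b) {A : ℕ → Matrix n n ℝ}
    (hLMI : ∀ k, (boundedRealLMI a b c W Z (A k * Z) B C).PosSemidef)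
    (w : ℕ → κ → ℝ) (X : ℕ → n → ℝ) (hX0 : X 0 = 0)
    (hX : ∀ k, X (k + 1) = A k *ᵥ X k + B *ᵥ w k) (N : ℕ) :
    ∑ k ∈ range N, (C *ᵥ X k) ⬝ᵥ (C *ᵥ X k) ≤ c * ∑ k ∈ range N, w k ⬝ᵥ w k := by
  have hscaled := sum_range_le_sum_range_of_dissipation (V := fun k => X k ⬝ᵥ (W⁻¹ *ᵥ X k))
    (by simp [hX0]) (fun k => by simpa using hW.inv.posSemidef.dotProduct_mulVec_nonneg (X k))
    (fun k => by
      simpa only [hX] using dissipation_of_posSemidef_boundedRealLMI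
        hW hZ ha0 ha1 hb (hLMI k) (X k) (w k)) N
  rw [← mul_sum, ← mul_sum, mul_assoc] at hscaled
  exact le_of_mul_le_mul_left hscaled hb

lemma sum_range_dotProduct_le_of_posSemidef_boundedRealLMI_vertices {ι : Type*} [Fintype ι]
    {a b c : ℝ} {W Z : Matrix n n ℝ} {B : Matrix n κ ℝ} {C : Matrix ρ n ℝ} (hW : W.PosDef)
    (hZ : IsUnit Z) (ha0 : 0 ≤ a) (ha1 : a ≤ 1) (hb : 0 < b) {Ω : ι → Matrix n n ℝ}
    (hΩ : ∀ j, (boundedRealLMI a b c W Z (Ω j) B C).PosSemidef) {θ : ℕ → ι → ℝ}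
    (hθ0 : ∀ k j, 0 ≤ θ k j) (hθ1 : ∀ k, ∑ j, θ k j = 1) {A : ℕ → Matrix n n ℝ}
    (hA : ∀ k, A k * Z = ∑ j, θ k j • Ω j)
    (w : ℕ → κ → ℝ) (X : ℕ → n → ℝ) (hX0 : X 0 = 0)
    (hX : ∀ k, X (k + 1) = A k *ᵥ X k + B *ᵥ w k) (N : ℕ) :
    ∑ k ∈ range N, (C *ᵥ X k) ⬝ᵥ (C *ᵥ X k) ≤ c * ∑ k ∈ range N, w k ⬝ᵥ w k := by
  refine sum_range_dotProduct_le_of_posSemidef_boundedRealLMI hW hZ ha0 ha1 hb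
    (fun k => ?_) w X hX0 hX N
  rw [hA k]
  exact posSemidef_boundedRealLMI_sum_smul (fun j _ => hθ0 k j) (hθ1 k) (fun j _ => hΩ j)

end BoundedReal

theorem stmt_16_general (p : ℕ) (r : ℕ)
    (SM : Fin r → Matrix (Fin 3 ⊕ Fin p) (Fin 3 ⊕ Fin p) ℝ)
    (SH : Fin r → Matrix (Fin 3 ⊕ Fin p) (Fin 1) ℝ)
    (C : Matrix (Fin 1) (Fin 3 ⊕ Fin p) ℝ)
    (L : Matrix (Fin 3 ⊕ Fin p) (Fin 1) ℝ)
    (G : Matrix (Fin 3 ⊕ Fin p) (Fin 2) ℝ)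
    (W : Matrix (Fin 3 ⊕ Fin p) (Fin 3 ⊕ Fin p) ℝ) (hW : W.PosDef)
    (Z : Matrix (Fin 3 ⊕ Fin p) (Fin 3 ⊕ Fin p) ℝ)
    (hZunit : IsUnit Z)
    (σ γ a b : ℝ)
    (ha0 : 0 < a) (ha1 : a ≤ 1) (hb : 0 < b)
    (Kbar : Matrix (Fin 1) (Fin 3 ⊕ Fin p) ℝ)
    (Ω : Fin r → Matrix (Fin 3 ⊕ Fin p) (Fin 3 ⊕ Fin p) ℝ)
    (hΩ : ∀ j, Ω j = (SM j - SH j * Kbar) * Z)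
    (hLMI1 : ∀ j, (Matrix.fromBlocks
      (Matrix.fromBlocks (a • (Zᵀ + Z - W)) (Ω j)ᵀ (Ω j) W)
      (Matrix.fromBlocks (0 : Matrix (Fin 3 ⊕ Fin p) (Fin 1) ℝ) (Zᵀ * Cᵀ) L 0)
      (Matrix.fromBlocks (0 : Matrix (Fin 1) (Fin 3 ⊕ Fin p) ℝ) Lᵀ (C * Z) 0)
      (Matrix.fromBlocks ((b * σ) • (1 : Matrix (Fin 1) (Fin 1) ℝ)) 0 0
        ((1 / b) • (1 : Matrix (Fin 1) (Fin 1) ℝ)))).PosSemidef)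
    (hLMI2 : ∀ j, (Matrix.fromBlocks
      (Matrix.fromBlocks (a • (Zᵀ + Z - W)) (Ω j)ᵀ (Ω j) W)
      (Matrix.fromBlocks (0 : Matrix (Fin 3 ⊕ Fin p) (Fin 2) ℝ) (Zᵀ * Cᵀ) G 0)
      (Matrix.fromBlocks (0 : Matrix (Fin 2) (Fin 3 ⊕ Fin p) ℝ) Gᵀ (C * Z) 0)
      (Matrix.fromBlocks ((b * γ) • (1 : Matrix (Fin 2) (Fin 2) ℝ)) 0 0
        ((1 / b) • (1 : Matrix (Fin 1) (Fin 1) ℝ)))).PosSemidef) :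
    ∀ σs : ℕ → Fin r → ℝ, (∀ k j, 0 ≤ σs k j) → (∀ k, (∑ j, σs k j) = 1) →
    ((∀ w : ℕ → ℝ, ∀ X : ℕ → Fin 3 ⊕ Fin p → ℝ, X 0 = 0 →
      (∀ k, X (k + 1) =
        ((∑ j, σs k j • SM j) - (∑ j, σs k j • SH j) * Kbar).mulVec (X k)
          + L.mulVec ![w k]) →
      ∀ K' : ℕ, ∑ k ∈ Finset.range K', (C.mulVec (X k) 0) ^ 2
        ≤ σ * ∑ k ∈ Finset.range K', (w k) ^ 2)
    ∧
    (∀ d : ℕ → EuclideanSpace ℝ (Fin 2), ∀ X : ℕ → Fin 3 ⊕ Fin p → ℝ, X 0 = 0 →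
      (∀ k, X (k + 1) =
        ((∑ j, σs k j • SM j) - (∑ j, σs k j • SH j) * Kbar).mulVec (X k)
          + G.mulVec (d k)) →
      ∀ K' : ℕ, ∑ k ∈ Finset.range K', (C.mulVec (X k) 0) ^ 2
        ≤ γ * ∑ k ∈ Finset.range K', ‖d k‖ ^ 2)) := by
  intro θ hθ0 hθ1
  have hAZ : ∀ k, ((∑ j, θ k j • SM j) - (∑ j, θ k j • SH j) * Kbar) * Z = ∑ j, θ k j • Ω j := by
    intro k
    simp only [hΩ, Matrix.sub_mul, smul_sub, sum_sub_distrib, Matrix.sum_mul, Matrix.smul_mul]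
  constructor
  · intro w X hX0 hX N
    simpa [dotProduct, ← sq] using sum_range_dotProduct_le_of_posSemidef_boundedRealLMI_vertices
      (C := C) hW hZunit ha0.le ha1 hb hLMI1 hθ0 hθ1 hAZ (fun k => ![w k]) X hX0 hX N
  · intro d X hX0 hX N
    simpa [EuclideanSpace.real_norm_sq_eq, dotProduct, ← sq] using
      sum_range_dotProduct_le_of_posSemidef_boundedRealLMI_vertices
        (C := C) hW hZunit ha0.le ha1 hb hLMI2 hθ0 hθ1 hAZ (fun k => d k) X hX0 hX N

/-- Theorem 2: feasibility of the string-stability and disturbance-attenuation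
LMIs at the vertices of the polytopic overapproximation yields a controller
gain `K = 𝒴̃ 𝒵̃₁⁻¹` guaranteeing ℓ₂ string stability with factor `σ` and
disturbance attenuation level `γ` for every admissible delay sequence. -/
theorem stmt_16 (p : ℕ) (hp : 1 ≤ p) (r : ℕ) (hr : 0 < r)
    (SM : Fin r → Matrix (Fin 3 ⊕ Fin p) (Fin 3 ⊕ Fin p) ℝ)
    (SH : Fin r → Matrix (Fin 3 ⊕ Fin p) (Fin 1) ℝ)
    (C : Matrix (Fin 1) (Fin 3 ⊕ Fin p) ℝ)
    (L : Matrix (Fin 3 ⊕ Fin p) (Fin 1) ℝ)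
    (G : Matrix (Fin 3 ⊕ Fin p) (Fin 2) ℝ)
    (W : Matrix (Fin 3 ⊕ Fin p) (Fin 3 ⊕ Fin p) ℝ) (hW : W.PosDef)
    (Y : Matrix (Fin 1) (Fin 3) ℝ)
    (Z1 : Matrix (Fin 3) (Fin 3) ℝ) (Z2 : Matrix (Fin p) (Fin 3) ℝ)
    (Z3 : Matrix (Fin p) (Fin p) ℝ)
    (Z : Matrix (Fin 3 ⊕ Fin p) (Fin 3 ⊕ Fin p) ℝ)
    (hZ : Z = Matrix.fromBlocks Z1 0 Z2 Z3)
    (hZunit : IsUnit Z) (hZ1unit : IsUnit Z1)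
    (σ γ a b : ℝ) (hσ0 : 0 < σ) (hσ1 : σ ≤ 1) (hγ : 0 < γ)
    (ha0 : 0 < a) (ha1 : a ≤ 1) (hb : 0 < b)
    (K : Matrix (Fin 1) (Fin 3) ℝ) (hK : K = Y * Z1⁻¹)
    (Kbar : Matrix (Fin 1) (Fin 3 ⊕ Fin p) ℝ)
    (hKbar : Kbar = Matrix.fromCols K (0 : Matrix (Fin 1) (Fin p) ℝ))
    (Ω : Fin r → Matrix (Fin 3 ⊕ Fin p) (Fin 3 ⊕ Fin p) ℝ)
    (hΩ : ∀ j, Ω j = (SM j - SH j * Kbar) * Z)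
    (hLMI1 : ∀ j, (Matrix.fromBlocks
      (Matrix.fromBlocks (a • (Zᵀ + Z - W)) (Ω j)ᵀ (Ω j) W)
      (Matrix.fromBlocks (0 : Matrix (Fin 3 ⊕ Fin p) (Fin 1) ℝ) (Zᵀ * Cᵀ) L 0)
      (Matrix.fromBlocks (0 : Matrix (Fin 1) (Fin 3 ⊕ Fin p) ℝ) Lᵀ (C * Z) 0)
      (Matrix.fromBlocks ((b * σ) • (1 : Matrix (Fin 1) (Fin 1) ℝ)) 0 0
        ((1 / b) • (1 : Matrix (Fin 1) (Fin 1) ℝ)))).PosSemidef)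
    (hLMI2 : ∀ j, (Matrix.fromBlocks
      (Matrix.fromBlocks (a • (Zᵀ + Z - W)) (Ω j)ᵀ (Ω j) W)
      (Matrix.fromBlocks (0 : Matrix (Fin 3 ⊕ Fin p) (Fin 2) ℝ) (Zᵀ * Cᵀ) G 0)
      (Matrix.fromBlocks (0 : Matrix (Fin 2) (Fin 3 ⊕ Fin p) ℝ) Gᵀ (C * Z) 0)
      (Matrix.fromBlocks ((b * γ) • (1 : Matrix (Fin 2) (Fin 2) ℝ)) 0 0
        ((1 / b) • (1 : Matrix (Fin 1) (Fin 1) ℝ)))).PosSemidef) :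
    ∀ σs : ℕ → Fin r → ℝ, (∀ k j, 0 ≤ σs k j) → (∀ k, (∑ j, σs k j) = 1) →
    ((∀ w : ℕ → ℝ, ∀ X : ℕ → Fin 3 ⊕ Fin p → ℝ, X 0 = 0 →
      (∀ k, X (k + 1) =
        ((∑ j, σs k j • SM j) - (∑ j, σs k j • SH j) * Kbar).mulVec (X k)
          + L.mulVec ![w k]) →
      ∀ K' : ℕ, ∑ k ∈ Finset.range K', (C.mulVec (X k) 0) ^ 2
        ≤ σ * ∑ k ∈ Finset.range K', (w k) ^ 2)
    ∧
    (∀ d : ℕ → EuclideanSpace ℝ (Fin 2), ∀ X : ℕ → Fin 3 ⊕ Fin p → ℝ, X 0 = 0 →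
      (∀ k, X (k + 1) =
        ((∑ j, σs k j • SM j) - (∑ j, σs k j • SH j) * Kbar).mulVec (X k)
          + G.mulVec (d k)) →
      ∀ K' : ℕ, ∑ k ∈ Finset.range K', (C.mulVec (X k) 0) ^ 2
        ≤ γ * ∑ k ∈ Finset.range K', ‖d k‖ ^ 2)) :=
  stmt_16_general p r SM SH C L G W hW Z hZunit σ γ a b ha0 ha1 hb Kbar Ω hΩ hLMI1 hLMI2
end
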